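/- arXiv:math/0110179 — 5 statements merged into one kernel-verified Lean document; each statement's English description precedes it below -/
import Mathlib

section
/- Let p and q be coprime integers with q ≠ 0, p + q odd, and |p| > |q|. Then there exist a unique n ≥ 1 and a unique sequence of even integers α₁, …, αₙ with |αᵢ| ≥ 2 for all i such that p/q = [[α₁, …, αₙ]]. -/
/-- Negative continued fraction `[[α₁, …, αₙ]] = α₁ - 1/(α₂ - 1/(⋯ - 1/αₙ))`,
defined on lists of integers (`ncf [] = 0` is a junk value). -/
def ncf : List ℤ → ℚ
  | [] => 0
  | [a] => (a : ℚ)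
  | a :: b :: l => (a : ℚ) - 1 / ncf (b :: l)

/-!
The expansion is computed by the even nearest-integer algorithm. Because `p + q` is odd,
`x = p / q` is never an odd integer, so there is an even `a` with `|x - a| < 1`; it is nonzero
since `|x| > 1`, and `x = a - 1 / (q / (a q - p))` where `|a q - p| < |q|` and `q + (a q - p)` is
again odd, so the algorithm terminates. Conversely every tail of an even expansion has
absolute value `> 1`, so `α₁` is the unique even integer within distance `1` of
`[[α₁, …, αₙ]]`; peeling off first terms gives uniqueness.
-/

theorem ncf_cons_of_ne_nil (a : ℤ) {t : List ℤ} (ht : t ≠ []) :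
    ncf (a :: t) = a - (ncf t)⁻¹ := by
  obtain ⟨b, l, rfl⟩ := List.exists_cons_of_ne_nil ht
  simp [ncf]

def IsEvenNCF (L : List ℤ) : Prop :=
  ∀ a ∈ L, Even a ∧ 2 ≤ |a|

theorem isEvenNCF_cons {a : ℤ} {t : List ℤ} :
    IsEvenNCF (a :: t) ↔ (Even a ∧ 2 ≤ |a|) ∧ IsEvenNCF t :=
  List.forall_mem_cons

theorem one_lt_abs_ncf {L : List ℤ} (hne : L ≠ []) (hL : IsEvenNCF L) : 1 < |ncf L| := by
  induction L with
  | nil => contradiction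
  | cons a t ih =>
    obtain ⟨⟨-, ha⟩, ht⟩ := isEvenNCF_cons.1 hL
    have ha' : (2 : ℚ) ≤ |(a : ℚ)| := by exact_mod_cast ha
    rcases eq_or_ne t [] with rfl | ht_ne
    · change 1 < |(a : ℚ)|
      linarith
    · have hinv : |(ncf t)⁻¹| < 1 := by
        rw [abs_inv]
        exact inv_lt_one_of_one_lt₀ (ih ht_ne ht)
      rw [ncf_cons_of_ne_nil a ht_ne]
      calc (1 : ℚ) < |(a : ℚ)| - |(ncf t)⁻¹| := by linarith
        _ ≤ |a - (ncf t)⁻¹| := abs_sub_abs_le_abs_sub _ _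

theorem abs_ncf_cons_sub_lt_one (a : ℤ) {t : List ℤ} (ht : IsEvenNCF t) :
    |ncf (a :: t) - a| < 1 := by
  rcases eq_or_ne t [] with rfl | hne
  · simp [ncf]
  · rw [ncf_cons_of_ne_nil a hne, sub_sub_cancel_left, abs_neg, abs_inv]
    exact inv_lt_one_of_one_lt₀ (one_lt_abs_ncf hne ht)

theorem ncf_cons_ne_self (a : ℤ) {t : List ℤ} (hne : t ≠ []) (ht : IsEvenNCF t) :
    ncf (a :: t) ≠ a := by
  have h0 : ncf t ≠ 0 := abs_pos.1 (one_pos.trans (one_lt_abs_ncf hne ht))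
  rw [ncf_cons_of_ne_nil a hne, Ne, sub_eq_self]
  exact inv_ne_zero h0

theorem eq_of_even_of_abs_sub_lt_one {K : Type*} [CommRing K] [LinearOrder K] [IsStrictOrderedRing K]
    {a b : ℤ} (ha : Even a) (hb : Even b) {x : K} (hxa : |x - a| < 1) (hxb : |x - b| < 1) :
    a = b := by
  have hK : |((a - b : ℤ) : K)| < 2 := by
    push_cast
    calc |(a : K) - b| = |(x - b) - (x - a)| := by rw [sub_sub_sub_cancel_left]
      _ ≤ |x - b| + |x - a| := abs_sub _ _
      _ < 2 := by linarith
  have hab : |a - b| < 2 := by exact_mod_cast hK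
  obtain ⟨k, rfl⟩ := ha
  obtain ⟨l, rfl⟩ := hb
  rw [abs_lt] at hab
  omega

theorem ncf_injOn : Set.InjOn ncf {L | L ≠ [] ∧ IsEvenNCF L} := by
  intro L hL L' hL' heq
  induction L generalizing L' with
  | nil => exact absurd rfl hL.1
  | cons a t ih =>
    obtain ⟨a', t', rfl⟩ := List.exists_cons_of_ne_nil hL'.1
    obtain ⟨⟨ha, -⟩, ht⟩ := isEvenNCF_cons.1 hL.2
    obtain ⟨⟨ha', -⟩, ht'⟩ := isEvenNCF_cons.1 hL'.2
    obtain rfl : a = a' := eq_of_even_of_abs_sub_lt_one ha ha' (abs_ncf_cons_sub_lt_one a ht)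
      (heq ▸ abs_ncf_cons_sub_lt_one a' ht')
    rcases eq_or_ne t [] with rfl | hne <;> rcases eq_or_ne t' [] with rfl | hne'
    · rfl
    · exact absurd heq.symm (ncf_cons_ne_self a hne' ht')
    · exact absurd heq (ncf_cons_ne_self a hne ht)
    · rw [ncf_cons_of_ne_nil a hne, ncf_cons_of_ne_nil a hne', sub_right_inj, inv_inj] at heq
      rw [ih ⟨hne, ht⟩ ⟨hne', ht'⟩ heq]

theorem exists_even_abs_sub_lt_one {K : Type*} [Field K] [LinearOrder K] [IsStrictOrderedRing K]
    [FloorRing K] {x : K} (hx : ∀ m : ℤ, Odd m → x ≠ m) : ∃ a : ℤ, Even a ∧ |x - a| < 1 := by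
  set a := 2 * round (x / 2)
  have hle : |x - a| ≤ 1 := by
    have h := abs_sub_round (x / 2)
    rw [show x - a = 2 * (x / 2 - round (x / 2)) by push_cast [a]; ring, abs_mul, abs_two]
    linarith
  refine ⟨a, even_two_mul _, hle.lt_of_ne fun h => ?_⟩
  rcases (abs_eq zero_le_one).1 h with h | h
  · exact hx (a + 1) (even_two_mul _).add_one (by push_cast; linarith)
  · exact hx (a - 1) ((even_two_mul _).sub_odd odd_one) (by push_cast; linarith)

theorem intCast_div_ne_of_odd_add {p q : ℤ} (hodd : Odd (p + q)) (m : ℤ) (hm : Odd m) :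
    (p : ℚ) / q ≠ m := by
  intro h
  rcases eq_or_ne q 0 with rfl | hq
  · rw [Int.cast_zero, div_zero, eq_comm, Int.cast_eq_zero] at h
    exact absurd (h ▸ hm) (by simp)
  · have hp : p = m * q := by
      exact_mod_cast (div_eq_iff (Int.cast_ne_zero.2 hq)).1 h
    rw [hp, ← add_one_mul] at hodd
    exact Int.not_even_iff_odd.2 hodd (hm.add_one.mul_right q)

theorem two_le_abs_of_even_of_ne_zero {a : ℤ} (ha : Even a) (ha0 : a ≠ 0) : 2 ≤ |a| := by
  obtain ⟨k, rfl⟩ := ha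
  rcases abs_cases (k + k) with ⟨h, _⟩ | ⟨h, _⟩ <;> omega

theorem exists_ncf_eq_div {p q : ℤ} (hq : q ≠ 0) (hodd : Odd (p + q)) (habs : |q| < |p|) :
    ∃ L, L ≠ [] ∧ IsEvenNCF L ∧ ncf L = (p : ℚ) / q := by
  induction hn : q.natAbs using Nat.strong_induction_on generalizing p q with
  | _ n ih =>
    subst hn
    obtain ⟨a, ha, hxa⟩ := exists_even_abs_sub_lt_one (intCast_div_ne_of_odd_add hodd)
    have hqQ : (q : ℚ) ≠ 0 := Int.cast_ne_zero.2 hq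
    have hx : 1 < |(p : ℚ) / q| := by
      rw [abs_div, one_lt_div (abs_pos.2 hqQ)]
      exact_mod_cast habs
    have ha0 : a ≠ 0 := by
      rintro rfl
      rw [Int.cast_zero, sub_zero] at hxa
      linarith
    have ha2 : 2 ≤ |a| := two_le_abs_of_even_of_ne_zero ha ha0
    set r := a * q - p
    have hr : (r : ℚ) / q = a - p / q := by
      push_cast [r]
      field_simp
    rcases eq_or_ne r 0 with hr0 | hr0
    · refine ⟨[a], List.cons_ne_nil _ _, isEvenNCF_cons.2 ⟨⟨ha, ha2⟩, List.forall_mem_nil _⟩, ?_⟩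
      rw [hr0, Int.cast_zero, zero_div, eq_comm, sub_eq_zero] at hr
      exact hr
    · have hr_lt : |r| < |q| := by
        have : |(r : ℚ)| < |(q : ℚ)| := by
          rw [← div_lt_one (abs_pos.2 hqQ), ← abs_div, hr, abs_sub_comm]
          exact hxa
        exact_mod_cast this
      have hodd' : Odd (q + r) := by
        rw [show q + r = (p + q) + (a * q - 2 * p) by ring]
        exact hodd.add_even ((ha.mul_right q).sub (even_two_mul p))
      have hlt : r.natAbs < q.natAbs := by
        rw [Int.abs_eq_natAbs, Int.abs_eq_natAbs] at hr_lt
        exact_mod_cast hr_lt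
      obtain ⟨L, hL, hLe, hLv⟩ := ih _ hlt hr0 hodd' hr_lt rfl
      refine ⟨a :: L, List.cons_ne_nil _ _, isEvenNCF_cons.2 ⟨⟨ha, ha2⟩, hLe⟩, ?_⟩
      rw [ncf_cons_of_ne_nil a hL, hLv, inv_div, hr]
      ring

theorem ncf_even_expansion_existsUnique_general (p q : ℤ) (hq : q ≠ 0)
    (hodd : Odd (p + q)) (habs : |q| < |p|) :
    ∃! L : List ℤ, L ≠ [] ∧ (∀ a ∈ L, Even a ∧ 2 ≤ |a|) ∧ ncf L = (p : ℚ) / (q : ℚ) := by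
  obtain ⟨L, hL⟩ := exists_ncf_eq_div hq hodd habs
  exact ⟨L, hL, fun L' hL' =>
    ncf_injOn ⟨hL'.1, hL'.2.1⟩ ⟨hL.1, hL.2.1⟩ (hL'.2.2.trans hL.2.2.symm)⟩

/-- If `p`, `q` are coprime with `q ≠ 0`, `p + q` odd and `|p| > |q|`, then `p/q` has a
unique expansion as a negative continued fraction `[[α₁,…,αₙ]]` with all `αᵢ` even and
`|αᵢ| ≥ 2`. -/
theorem ncf_even_expansion_existsUnique (p q : ℤ) (hq : q ≠ 0)
    (hpq : Int.gcd p q = 1) (hodd : Odd (p + q)) (habs : |q| < |p|) :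
    ∃! L : List ℤ, L ≠ [] ∧ (∀ a ∈ L, Even a ∧ 2 ≤ |a|) ∧ ncf L = (p : ℚ) / (q : ℚ) :=
  ncf_even_expansion_existsUnique_general p q hq hodd habs
end

section
/- Let p and q be coprime integers with q ≠ 0, p + q odd, and |p| > |q|, and suppose p/q = [[α₁, …, αₙ]] for even integers α₁, …, αₙ with |αᵢ| ≥ 2 for all i. Then the length n of the expansion satisfies n ≡ q (mod 2). -/
/-- Numerator and denominator of `[[α₁, …, αₙ]]`. The empty list stands for `∞ = 1/0`, so that
`[[a, α₂, …]] = a - Q/P = (a P - Q)/P` for `P/Q = [[α₂, …]]` covers the one-term case as well. -/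
def ncfNumDen : List ℤ → ℤ × ℤ
  | [] => (1, 0)
  | a :: l => (a * (ncfNumDen l).1 - (ncfNumDen l).2, (ncfNumDen l).1)

theorem isCoprime_ncfNumDen : ∀ L : List ℤ, IsCoprime (ncfNumDen L).1 (ncfNumDen L).2
  | [] => isCoprime_one_left
  | a :: l => by
    have h := (isCoprime_ncfNumDen l).symm.neg_left.add_mul_left_left a
    simpa only [ncfNumDen, neg_add_eq_sub, mul_comm] using h

theorem ncfNumDen_modEq_length {L : List ℤ} (hL : ∀ a ∈ L, Even a) :
    (ncfNumDen L).2 ≡ L.length [ZMOD 2] ∧ (ncfNumDen L).1 ≡ L.length + 1 [ZMOD 2] := by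
  induction L with
  | nil => decide
  | cons a l ih =>
    obtain ⟨hden, hnum⟩ := ih fun b hb => hL b (List.mem_cons_of_mem a hb)
    obtain ⟨r, rfl⟩ := hL a List.mem_cons_self
    simp only [ncfNumDen, List.length_cons, Nat.cast_succ, Int.ModEq] at hden hnum ⊢
    constructor
    · exact hnum
    · have : (r + r) * (ncfNumDen l).1 = 2 * (r * (ncfNumDen l).1) := by ring
      omega

theorem abs_ncfNumDen_snd_lt_fst {L : List ℤ} (hL : ∀ a ∈ L, 2 ≤ |a|) :
    |(ncfNumDen L).2| < |(ncfNumDen L).1| := by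
  induction L with
  | nil => simp [ncfNumDen]
  | cons a l ih =>
    have hlt := ih fun b hb => hL b (List.mem_cons_of_mem a hb)
    have ha := hL a List.mem_cons_self
    set P := (ncfNumDen l).1
    set Q := (ncfNumDen l).2
    show |P| < |a * P - Q|
    calc |P| < 2 * |P| - |Q| := by linarith
      _ ≤ |a| * |P| - |Q| := by gcongr
      _ ≤ |a * P - Q| := by rw [← abs_mul]; exact abs_sub_abs_le_abs_sub _ _

theorem ncfNumDen_fst_ne_zero {L : List ℤ} (hL : ∀ a ∈ L, 2 ≤ |a|) : (ncfNumDen L).1 ≠ 0 :=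
  abs_pos.mp ((abs_nonneg _).trans_lt (abs_ncfNumDen_snd_lt_fst hL))

theorem ncf_eq_ncfNumDen {L : List ℤ} (hL : ∀ a ∈ L, 2 ≤ |a|) (hne : L ≠ []) :
    ncf L = (ncfNumDen L).1 / (ncfNumDen L).2 := by
  induction L with
  | nil => exact absurd rfl hne
  | cons a l ih =>
    rcases l with _ | ⟨b, l⟩
    · simp [ncf, ncfNumDen]
    · have hbl : ∀ c ∈ b :: l, 2 ≤ |c| := fun c hc => hL c (List.mem_cons_of_mem a hc)
      set P := (ncfNumDen (b :: l)).1
      set Q := (ncfNumDen (b :: l)).2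
      have hP : (P : ℚ) ≠ 0 := by exact_mod_cast ncfNumDen_fst_ne_zero hbl
      calc ncf (a :: b :: l) = a - 1 / (P / Q) := by rw [ncf, ih hbl (List.cons_ne_nil b l)]
        _ = ((a * P - Q : ℤ) : ℚ) / P := by push_cast; field_simp

theorem ncfNumDen_snd_ne_zero {L : List ℤ} (hL : ∀ a ∈ L, 2 ≤ |a|) (hne : L ≠ []) :
    (ncfNumDen L).2 ≠ 0 := by
  obtain ⟨a, l, rfl⟩ := List.exists_cons_of_ne_nil hne
  exact ncfNumDen_fst_ne_zero fun b hb => hL b (List.mem_cons_of_mem a hb)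

theorem Int.associated_of_div_eq_div {p q P Q : ℤ} (hpq : IsCoprime p q) (hPQ : IsCoprime P Q)
    (hq : q ≠ 0) (hQ : Q ≠ 0) (h : (p : ℚ) / q = P / Q) : Associated q Q := by
  have hcross : p * Q = P * q := by
    rw [div_eq_div_iff (by exact_mod_cast hq) (by exact_mod_cast hQ)] at h
    exact_mod_cast h
  refine associated_of_dvd_dvd (hpq.symm.dvd_of_dvd_mul_left ?_) (hPQ.symm.dvd_of_dvd_mul_left ?_)
  · exact ⟨P, by rw [hcross, mul_comm]⟩
  · exact ⟨p, by rw [← hcross, mul_comm]⟩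

theorem ncf_even_expansion_length_parity_general (p q : ℤ) (hq : q ≠ 0)
    (hpq : Int.gcd p q = 1)
    (L : List ℤ) (hL : L ≠ []) (hLe : ∀ a ∈ L, Even a ∧ 2 ≤ |a|)
    (hLncf : ncf L = (p : ℚ) / (q : ℚ)) :
    Int.ModEq 2 (L.length : ℤ) q := by
  have hbig : ∀ a ∈ L, 2 ≤ |a| := fun a ha => (hLe a ha).2
  have hassoc : Associated q (ncfNumDen L).2 :=
    Int.associated_of_div_eq_div (Int.isCoprime_iff_gcd_eq_one.mpr hpq) (isCoprime_ncfNumDen L) hq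
      (ncfNumDen_snd_ne_zero hbig hL) (hLncf ▸ ncf_eq_ncfNumDen hbig hL)
  have hden := (ncfNumDen_modEq_length fun a ha => (hLe a ha).1).1
  rcases Int.associated_iff.mp hassoc with h | h <;> simp only [Int.ModEq] at hden ⊢ <;> omega

/-- The length `n` of the even negative continued fraction expansion of `p/q` satisfies
`n ≡ q (mod 2)`. -/
theorem ncf_even_expansion_length_parity (p q : ℤ) (hq : q ≠ 0)
    (hpq : Int.gcd p q = 1) (hodd : Odd (p + q)) (habs : |q| < |p|)
    (L : List ℤ) (hL : L ≠ []) (hLe : ∀ a ∈ L, Even a ∧ 2 ≤ |a|)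
    (hLncf : ncf L = (p : ℚ) / (q : ℚ)) :
    Int.ModEq 2 (L.length : ℤ) q :=
  ncf_even_expansion_length_parity_general p q hq hpq L hL hLe hLncf
end

section
/- For every integer n ≥ 2, σ(n−1, n, −1) = −(n−1). -/
/-!
For `q = n - 1` one has `πkq/n = kπ - θ` with `θ = πk/n`, so each summand of `σ(n - 1, n, -1)`
collapses to `1 - 3 csc² θ`, and the theorem reduces to the classical identity
`∑_{k=1}^{n-1} csc²(πk/n) = (n² - 1)/3`.

For that identity put `x = e^{2iθ}`, an `n`-th root of unity other than `1`. Then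
`(1 - x)² = -4x sin² θ`, while a polynomial identity gives `(1 - x)² ∑_{j<n} j(n-j) xʲ = 2nx`;
hence `n csc² θ = -2 ∑_{j<n} j(n-j) xʲ`. Summed over the nontrivial roots, every `xʲ` with
`0 < j < n` contributes `-1`, leaving `2 ∑_{j<n} j(n-j) = n(n² - 1)/3`.
-/

/-- The invariant `σ(q, p, ε)` (Fukumoto–Furuta–Ue): for integers `p ≠ 0`, `q` coprime to `p`
and a sign `ε ∈ {1, -1}`,
`σ(q,p,ε) = (1/p) ∑_{k=1}^{|p|-1} ( cot(πk/p)·cot(πkq/p) + 2 ε^k csc(πk/p)·csc(πkq/p) )`. -/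
noncomputable def sigmaFFU (q p ε : ℤ) : ℝ :=
  (1 / (p : ℝ)) * ∑ k ∈ Finset.Icc 1 (p.natAbs - 1),
    ((Real.cos (Real.pi * k / p) / Real.sin (Real.pi * k / p)) *
       (Real.cos (Real.pi * k * q / p) / Real.sin (Real.pi * k * q / p)) +
     2 * (ε : ℝ) ^ k *
       ((1 / Real.sin (Real.pi * k / p)) * (1 / Real.sin (Real.pi * k * q / p))))

open Finset
open scoped Real

section GeomSums
variable {R : Type*} [CommRing R]

lemma one_sub_mul_sum_range_natCast_mul_pow (x : R) (n : ℕ) :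
    (1 - x) * ∑ j ∈ range n, (j : R) * x ^ j = ∑ j ∈ range n, x ^ j - 1 - (n - 1) * x ^ n := by
  induction n with
  | zero => simp
  | succ n ih => rw [sum_range_succ, sum_range_succ]; push_cast; linear_combination ih

lemma sum_range_succ_natCast_mul_sub_mul_pow (x : R) (n : ℕ) :
    ∑ j ∈ range (n + 1), (j : R) * ((n + 1 : ℕ) - j) * x ^ j
      = ∑ j ∈ range n, (j : R) * (n - j) * x ^ j + ∑ j ∈ range n, (j : R) * x ^ j
        + n * x ^ n := by
  rw [sum_range_succ, ← sum_add_distrib]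
  push_cast
  congr 1
  · exact sum_congr rfl fun j _ => by ring
  · ring

lemma sq_one_sub_mul_sum_range_mul_sub_mul_pow (x : R) (n : ℕ) :
    (1 - x) ^ 2 * ∑ j ∈ range n, (j : R) * (n - j) * x ^ j + 2 * ∑ j ∈ range n, x ^ j
      = 2 + (n + 1) * x - 2 * x ^ n + (n - 1) * x ^ (n + 1) := by
  induction n with
  | zero => simp
  | succ n ih =>
    rw [sum_range_succ_natCast_mul_sub_mul_pow, sum_range_succ]
    push_cast
    linear_combination ih + (1 - x) * one_sub_mul_sum_range_natCast_mul_pow x n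
      + mul_neg_geom_sum x n

lemma six_mul_sum_range_natCast_mul_sub (n : ℕ) :
    6 * ∑ j ∈ range n, (j : R) * (n - j) = n * (n ^ 2 - 1) := by
  have gauss (m : ℕ) : 2 * ∑ j ∈ range m, (j : R) = m * (m - 1) := by
    induction m with
    | zero => simp
    | succ m ih => rw [sum_range_succ]; push_cast; linear_combination ih
  induction n with
  | zero => simp
  | succ n ih =>
    have h := sum_range_succ_natCast_mul_sub_mul_pow (1 : R) n
    push_cast [one_pow, mul_one] at h ⊢
    rw [h]
    linear_combination ih + 3 * gauss n

end GeomSums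

lemma geom_sum_eq_zero_of_pow_eq_one {R : Type*} [CommRing R] [IsDomain R] {y : R} {n : ℕ}
    (hy : y ≠ 1) (hyn : y ^ n = 1) : ∑ k ∈ range n, y ^ k = 0 := by
  have h := mul_neg_geom_sum y n
  rw [hyn, sub_self] at h
  exact (mul_eq_zero.mp h).resolve_left (sub_ne_zero.mpr hy.symm)

lemma sum_Icc_pow_eq_neg_one_of_pow_eq_one {R : Type*} [CommRing R] [IsDomain R] {y : R}
    {n : ℕ} (hn : n ≠ 0) (hy : y ≠ 1) (hyn : y ^ n = 1) : ∑ k ∈ Icc 1 (n - 1), y ^ k = -1 := by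
  have h := geom_sum_eq_zero_of_pow_eq_one hy hyn
  rw [range_eq_Ico, sum_eq_sum_Ico_succ_bot (Nat.pos_of_ne_zero hn), pow_zero, zero_add,
    ← Nat.sub_add_cancel (Nat.one_le_iff_ne_zero.mpr hn), Ico_add_one_right_eq_Icc] at h
  linear_combination h

namespace Complex

lemma sq_one_sub_exp_two_mul_mul_I (t : ℂ) :
    (1 - exp (2 * t * I)) ^ 2 = -4 * exp (2 * t * I) * sin t ^ 2 := by
  have h2 : exp (2 * t * I) = exp (t * I) ^ 2 := by rw [← exp_nat_mul]; ring_nf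
  have hneg : exp (-t * I) = (exp (t * I))⁻¹ := by rw [← exp_neg]; ring_nf
  have he : exp (t * I) ≠ 0 := exp_ne_zero _
  rw [sin, h2, hneg]
  field_simp
  linear_combination 4 * (exp (t * I) ^ 2 - 1) ^ 2 * I_sq

lemma natCast_div_sin_sq_eq_sum {n k : ℕ} (hk0 : k ≠ 0) (hkn : k < n) :
    (n : ℂ) / sin (π * k / n) ^ 2
      = -2 * ∑ j ∈ range n, (j : ℂ) * (n - j) * (exp (2 * π * I / n) ^ j) ^ k := by
  set ζ := exp (2 * π * I / n)
  have hζ : IsPrimitiveRoot ζ n := isPrimitiveRoot_exp n (by omega)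
  set x := ζ ^ k
  have hx1 : x ≠ 1 := hζ.pow_ne_one_of_pos_of_lt hk0 hkn
  have hxn : x ^ n = 1 := by rw [pow_right_comm, hζ.pow_eq_one, one_pow]
  have hx0 : x ≠ 0 := pow_ne_zero _ (exp_ne_zero _)
  have hF := sq_one_sub_mul_sum_range_mul_sub_mul_pow x n
  rw [geom_sum_eq_zero_of_pow_eq_one hx1 hxn, pow_succ x n, hxn] at hF
  have hxexp : x = exp (2 * (π * k / n : ℂ) * I) := by
    rw [show 2 * (π * k / n : ℂ) * I = k * (2 * π * I / n) by ring, exp_nat_mul]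
  have hsin : (1 - x) ^ 2 = -4 * x * sin (π * k / n) ^ 2 := by
    rw [hxexp]; exact sq_one_sub_exp_two_mul_mul_I _
  have hs : sin (π * k / n) ≠ 0 := by
    intro hs
    have h : (1 - x) ^ 2 = 0 := by rw [hsin, hs]; ring
    exact hx1 (by linear_combination -(pow_eq_zero_iff two_ne_zero).mp h)
  simp_rw [← pow_mul, mul_comm _ k, pow_mul]
  have hcancel : x * (-2 * sin (π * k / n) ^ 2 * ∑ j ∈ range n, (j : ℂ) * (n - j) * x ^ j)
      = x * n := by
    linear_combination hF / 2 - (∑ j ∈ range n, (j : ℂ) * (n - j) * x ^ j) / 2 * hsin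
  rw [div_eq_iff (pow_ne_zero 2 hs)]
  linear_combination -(mul_left_cancel₀ hx0 hcancel)

lemma sum_Icc_one_div_sin_sq {n : ℕ} (hn : n ≠ 0) :
    ∑ k ∈ Icc 1 (n - 1), 1 / sin (π * k / n) ^ 2 = ((n : ℂ) ^ 2 - 1) / 3 := by
  set ζ := exp (2 * π * I / n)
  have hζ : IsPrimitiveRoot ζ n := isPrimitiveRoot_exp n hn
  have hterm : ∀ k ∈ Icc 1 (n - 1), (n : ℂ) * (1 / sin (π * k / n) ^ 2)
      = -2 * ∑ j ∈ range n, (j : ℂ) * (n - j) * (ζ ^ j) ^ k := by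
    intro k hk
    rw [mem_Icc] at hk
    rw [mul_one_div]
    exact natCast_div_sin_sq_eq_sum (by omega) (by omega)
  have horth : ∀ j ∈ range n, (j : ℂ) * (n - j) * ∑ k ∈ Icc 1 (n - 1), (ζ ^ j) ^ k
      = -((j : ℂ) * (n - j)) := by
    intro j hj
    rcases eq_or_ne j 0 with rfl | hj0
    · simp
    rw [sum_Icc_pow_eq_neg_one_of_pow_eq_one hn
      (hζ.pow_ne_one_of_pos_of_lt hj0 (mem_range.mp hj))
      (by rw [pow_right_comm, hζ.pow_eq_one, one_pow]), mul_neg_one]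
  apply mul_left_cancel₀ (Nat.cast_ne_zero.mpr hn : (n : ℂ) ≠ 0)
  calc (n : ℂ) * ∑ k ∈ Icc 1 (n - 1), 1 / sin (π * k / n) ^ 2
      = ∑ k ∈ Icc 1 (n - 1), -2 * ∑ j ∈ range n, (j : ℂ) * (n - j) * (ζ ^ j) ^ k := by
        rw [mul_sum]; exact sum_congr rfl hterm
    _ = -2 * ∑ j ∈ range n, (j : ℂ) * (n - j) * ∑ k ∈ Icc 1 (n - 1), (ζ ^ j) ^ k := by
        rw [← mul_sum, sum_comm]; simp_rw [mul_sum]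
    _ = n * ((n ^ 2 - 1) / 3) := by
        rw [sum_congr rfl horth, sum_neg_distrib]
        linear_combination (1 / 3 : ℂ) * six_mul_sum_range_natCast_mul_sub (R := ℂ) n

end Complex

namespace Real

lemma sum_Icc_one_div_sin_sq {n : ℕ} (hn : n ≠ 0) :
    ∑ k ∈ Icc 1 (n - 1), 1 / sin (π * k / n) ^ 2 = ((n : ℝ) ^ 2 - 1) / 3 := by
  exact_mod_cast Complex.sum_Icc_one_div_sin_sq hn

lemma cot_mul_cot_nat_mul_pi_sub_add_two_neg_one_pow_mul_csc_mul_csc {θ : ℝ}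
    (hθ : sin θ ≠ 0) (k : ℕ) :
    cos θ / sin θ * (cos (k * π - θ) / sin (k * π - θ))
      + 2 * (-1) ^ k * (1 / sin θ * (1 / sin (k * π - θ)))
      = 1 - 3 * (1 / sin θ ^ 2) := by
  rw [sin_nat_mul_pi_sub, cos_nat_mul_pi_sub]
  field_simp
  linear_combination (-1 : ℝ) * sin_sq_add_cos_sq θ

lemma sin_pi_mul_div_ne_zero {n k : ℕ} (hk0 : k ≠ 0) (hkn : k < n) :
    sin (π * k / n) ≠ 0 := by
  have hn : (0 : ℝ) < n := by exact_mod_cast (by omega : 0 < n)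
  refine (sin_pos_of_pos_of_lt_pi (by positivity) ?_).ne'
  rw [div_lt_iff₀ hn]
  have : (k : ℝ) < n := by exact_mod_cast hkn
  nlinarith [pi_pos]

end Real

/-- For `n ≥ 2`, `σ(n - 1, n, -1) = -(n - 1)`. -/
theorem sigmaFFU_pred (n : ℤ) (hn : 2 ≤ n) :
    sigmaFFU (n - 1) n (-1) = -((n : ℝ) - 1) := by
  lift n to ℕ using by omega
  have hn0 : (n : ℝ) ≠ 0 := by exact_mod_cast (by omega : n ≠ 0)
  have hsummand : ∀ k ∈ Icc 1 (n - 1),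
      Real.cos (π * k / n) / Real.sin (π * k / n)
          * (Real.cos (π * k * (n - 1) / n) / Real.sin (π * k * (n - 1) / n))
        + 2 * (-1) ^ k * (1 / Real.sin (π * k / n) * (1 / Real.sin (π * k * (n - 1) / n)))
        = 1 - 3 * (1 / Real.sin (π * k / n) ^ 2) := by
    intro k hk
    rw [mem_Icc] at hk
    rw [show π * k * ((n : ℝ) - 1) / n = k * π - π * k / n by field_simp]
    exact Real.cot_mul_cot_nat_mul_pi_sub_add_two_neg_one_pow_mul_csc_mul_csc
      (Real.sin_pi_mul_div_ne_zero (by omega) (by omega)) k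
  simp only [sigmaFFU, Int.natAbs_natCast, Int.cast_natCast, Int.cast_sub, Int.cast_one,
    Int.cast_neg]
  rw [sum_congr rfl hsummand, sum_sub_distrib, ← mul_sum, Real.sum_Icc_one_div_sin_sq (by omega),
    sum_const, Nat.card_Icc, Nat.add_sub_cancel, nsmul_eq_mul, Nat.cast_pred (by omega)]
  field_simp
  ring
end

section
/- For every integer n ≥ 2, σ(n, 1−n, −1) = 2 − n. -/
open Finset

section GeomSums

variable {R : Type*} [CommRing R]

theorem sub_one_mul_sum_range_mul_pow (x : R) (m : ℕ) :
    (x - 1) * ∑ j ∈ range m, (j : R) * x ^ j = (m - 1) * x ^ m - ∑ j ∈ range m, x ^ j + 1 := by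
  induction m with
  | zero => simp
  | succ m ih =>
    rw [sum_range_succ, sum_range_succ (fun j => x ^ j), mul_add, ih]
    push_cast
    ring

theorem sub_one_mul_sum_range_sq_mul_pow (x : R) (m : ℕ) :
    (x - 1) * ∑ j ∈ range m, (j : R) ^ 2 * x ^ j =
      (m - 1) ^ 2 * x ^ m - 2 * ∑ j ∈ range m, (j : R) * x ^ j + ∑ j ∈ range m, x ^ j - 1 := by
  induction m with
  | zero => simp
  | succ m ih =>
    rw [sum_range_succ, sum_range_succ (fun j => (j : R) * x ^ j), sum_range_succ (fun j => x ^ j),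
      mul_add, ih]
    push_cast
    ring

theorem sub_one_sq_mul_sum_range_mul_sub_mul_pow {ζ : R} {m : ℕ}
    (hζ : ∑ j ∈ range m, ζ ^ j = 0) :
    (ζ - 1) ^ 2 * ∑ j ∈ range m, (j * (m - j) : R) * ζ ^ j = 2 * m * ζ := by
  have hpow : ζ ^ m = 1 := by
    rw [← sub_eq_zero, ← geom_sum_mul, hζ, zero_mul]
  have h1 := sub_one_mul_sum_range_mul_pow ζ m
  have h2 := sub_one_mul_sum_range_sq_mul_pow ζ m
  rw [hpow, hζ] at h1 h2
  have hsplit : ∑ j ∈ range m, (j * (m - j) : R) * ζ ^ j =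
      m * ∑ j ∈ range m, (j : R) * ζ ^ j - ∑ j ∈ range m, (j : R) ^ 2 * ζ ^ j := by
    rw [mul_sum, ← sum_sub_distrib]
    exact sum_congr rfl fun j _ => by ring
  rw [hsplit]
  linear_combination (m * (ζ - 1) + 2) * h1 - (ζ - 1) * h2

theorem six_mul_sum_range_mul_sub (m : ℕ) :
    6 * ∑ j ∈ range m, (j * (m - j) : R) = (m + 1) * m * (m - 1) := by
  suffices ∀ a : R,
      6 * ∑ j ∈ range m, (j * (a - j) : R) = 3 * a * m * (m - 1) - (m - 1) * m * (2 * m - 1) by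
    rw [this]; ring
  intro a
  induction m with
  | zero => simp
  | succ m ih =>
    rw [sum_range_succ, mul_add, ih]
    push_cast
    ring

end GeomSums

theorem sum_Icc_pow_eq_neg_one {K : Type*} [Field K] {ξ : K} {m : ℕ} (hm : 0 < m)
    (hξ : ξ ^ m = 1) (hξ1 : ξ ≠ 1) : ∑ k ∈ Icc 1 (m - 1), ξ ^ k = -1 := by
  have hgeom : ∑ k ∈ range m, ξ ^ k = 0 := by rw [geom_sum_eq hξ1, hξ, sub_self, zero_div]
  rw [range_eq_Ico, sum_eq_sum_Ico_succ_bot hm, pow_zero, zero_add] at hgeom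
  rw [← Ico_add_one_right_eq_Icc, show m - 1 + 1 = m by omega]
  linear_combination hgeom

namespace IsPrimitiveRoot

variable {K : Type*} [Field K] [CharZero K] {ζ : K} {m : ℕ}

theorem pow_div_pow_sub_one_sq_eq_sum (hζ : IsPrimitiveRoot ζ m) {k : ℕ}
    (hk : k ∈ Icc 1 (m - 1)) :
    ζ ^ k / (ζ ^ k - 1) ^ 2 = (2 * m : K)⁻¹ * ∑ j ∈ range m, (j * (m - j) : K) * (ζ ^ j) ^ k := by
  rw [mem_Icc] at hk
  have hm : (m : K) ≠ 0 := by exact_mod_cast (by omega : m ≠ 0)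
  have hζk : ζ ^ k - 1 ≠ 0 := sub_ne_zero.mpr (hζ.pow_ne_one_of_pos_of_lt (by omega) (by omega))
  have hgeom : ∑ j ∈ range m, (ζ ^ k) ^ j = 0 := by
    rw [geom_sum_eq (sub_ne_zero.mp hζk), pow_right_comm, hζ.pow_eq_one, one_pow, sub_self,
      zero_div]
  simp_rw [← pow_mul, mul_comm _ k, pow_mul]
  field_simp
  linear_combination -sub_one_sq_mul_sum_range_mul_sub_mul_pow hgeom

theorem sum_Icc_pow_div_pow_sub_one_sq (hζ : IsPrimitiveRoot ζ m) (hm : 0 < m) :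
    ∑ k ∈ Icc 1 (m - 1), ζ ^ k / (ζ ^ k - 1) ^ 2 = -((m : K) ^ 2 - 1) / 12 := by
  have hinner : ∀ j ∈ range m,
      ∑ k ∈ Icc 1 (m - 1), (j * (m - j) : K) * (ζ ^ j) ^ k = -(j * (m - j)) := by
    intro j hj
    rw [mem_range] at hj
    rcases Nat.eq_zero_or_pos j with rfl | hj0
    · simp
    rw [← mul_sum, sum_Icc_pow_eq_neg_one hm (by rw [pow_right_comm, hζ.pow_eq_one, one_pow])
      (hζ.pow_ne_one_of_pos_of_lt hj0.ne' hj), mul_neg_one]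
  rw [sum_congr rfl fun k hk => hζ.pow_div_pow_sub_one_sq_eq_sum hk, ← mul_sum, sum_comm,
    sum_congr rfl hinner, sum_neg_distrib]
  have h6 := six_mul_sum_range_mul_sub (R := K) m
  have hm' : (m : K) ≠ 0 := by exact_mod_cast hm.ne'
  field_simp
  linear_combination -2 * h6

end IsPrimitiveRoot

theorem Complex.one_div_sin_sq (z : ℂ) :
    1 / sin z ^ 2 = -4 * exp (2 * z * I) / (exp (2 * z * I) - 1) ^ 2 := by
  have hsin : sin z ^ 2 = (exp (2 * z * I) - 1) ^ 2 / (-4 * exp (2 * z * I)) := by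
    rw [sin, neg_mul, exp_neg, show 2 * z * I = z * I + z * I by ring, exp_add]
    field_simp
    ring_nf
    rw [I_sq]
    ring
  rw [hsin, one_div, inv_div]

open Real

theorem Real.sum_Icc_one_div_sin_sq_s13 {m : ℕ} (hm : 0 < m) :
    ∑ k ∈ Icc 1 (m - 1), 1 / sin (π * k / m) ^ 2 = ((m : ℝ) ^ 2 - 1) / 3 := by
  apply Complex.ofReal_injective
  have hζ := Complex.isPrimitiveRoot_exp m hm.ne'
  set ζ := Complex.exp (2 * π * Complex.I / m)
  have hexp (k : ℕ) : Complex.exp (2 * (π * k / m) * Complex.I) = ζ ^ k := by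
    rw [← Complex.exp_nat_mul]
    ring_nf
  push_cast
  simp_rw [Complex.one_div_sin_sq, hexp, mul_div_assoc, ← mul_sum,
    hζ.sum_Icc_pow_div_pow_sub_one_sq hm]
  ring

theorem sigmaFFU_neg_right (q p ε : ℤ) : sigmaFFU q (-p) ε = -sigmaFFU q p ε := by
  simp only [sigmaFFU, Int.natAbs_neg, Int.cast_neg, div_neg, sin_neg, cos_neg, mul_neg, neg_mul,
    neg_neg]

theorem sigmaFFU_add_self (q p ε : ℤ) : sigmaFFU (q + p) p ε = sigmaFFU q p (-ε) := by
  rcases eq_or_ne p 0 with rfl | hp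
  · simp [sigmaFFU]
  unfold sigmaFFU
  congr 1
  refine sum_congr rfl fun k _ => ?_
  have hshift : π * k * ((q + p : ℤ) : ℝ) / p = π * k * q / p + k * π := by
    push_cast
    field_simp
  have hsign : ((-1 : ℝ) ^ k)⁻¹ = (-1) ^ k := by rw [← inv_pow, inv_neg_one]
  rw [hshift, sin_add_nat_mul_pi, cos_add_nat_mul_pi, mul_div_mul_left _ _ (by simp),
    Int.cast_neg, neg_pow (ε : ℝ)]
  simp only [one_div, mul_inv, hsign]
  ring

theorem sigmaFFU_one_one {p : ℤ} (hp : 0 < p) : sigmaFFU 1 p 1 = p - 1 := by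
  lift p to ℕ using hp.le
  have hp' : 0 < p := by exact_mod_cast hp
  have hterm : ∀ k ∈ Icc 1 (p - 1),
      cos (π * k / p) / sin (π * k / p) * (cos (π * k / p) / sin (π * k / p)) +
        2 * (1 / sin (π * k / p) * (1 / sin (π * k / p))) = 3 * (1 / sin (π * k / p) ^ 2) - 1 := by
    intro k hk
    rw [mem_Icc] at hk
    have hsin : sin (π * k / p) ≠ 0 := by
      refine (sin_pos_of_pos_of_lt_pi ?_ ?_).ne'
      · exact div_pos (mul_pos pi_pos (Nat.cast_pos.mpr (by omega))) (by positivity)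
      · rw [div_lt_iff₀ (by positivity), mul_lt_mul_iff_right₀ pi_pos]
        exact_mod_cast (by omega : k < p)
    field_simp
    linear_combination sin_sq_add_cos_sq (π * k / p)
  simp only [sigmaFFU, Int.natAbs_natCast, Int.cast_natCast, Int.cast_one, mul_one, one_pow]
  rw [sum_congr rfl hterm, sum_sub_distrib, ← mul_sum, sum_Icc_one_div_sin_sq_s13 hp', sum_const,
    Nat.card_Icc, nsmul_one, Nat.add_sub_cancel, Nat.cast_pred hp']
  field_simp
  ring

/-- For `n ≥ 2`, `σ(n, 1 - n, -1) = 2 - n`. -/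
theorem sigmaFFU_one_sub (n : ℤ) (hn : 2 ≤ n) :
    sigmaFFU n (1 - n) (-1) = 2 - (n : ℝ) := by
  calc sigmaFFU n (1 - n) (-1) = -sigmaFFU (1 + (n - 1)) (n - 1) (-1) := by
        rw [← sigmaFFU_neg_right, neg_sub, add_sub_cancel]
    _ = -sigmaFFU 1 (n - 1) 1 := by rw [sigmaFFU_add_self, neg_neg]
    _ = 2 - n := by
        rw [sigmaFFU_one_one (by omega)]
        push_cast
        ring
end

section
/- For every nonzero integer k, the negative continued fraction identity (10k−4)/5 = [[2k, 2, 2, 2, 2]] holds, and consequently σ(5, 10k−4, −1) = −4 − sgn(k). -/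
/-!
Write `p = 2h`, `q = 2r + 1`, `m = |p|` and `ω = e^{2πij/p}`. Then `cot(πj/p) = i(ω+1)/(ω-1)`,
`csc(πj/p) = 2i e^{πij/p}/(ω-1)` and `(-1)^j = e^{πij}`, so the `j`-th summand of `σ(q, p, -1)` is
`-((ω+1)(ω^q+1) + 8 ω^{h+r+1}) / ((ω-1)(ω^q-1))`, a rational function of the nontrivial `m`-th
root of unity `ω`. Expanding `1/(ω-1) = (1/m) ∑_{t<m} t ω^t` and summing over all `ω ≠ 1` by
orthogonality expresses `p σ(q, p, -1)` through the Dedekind-type sums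
`∑_{s<m} s · ((-(q s + a)) mod m)` with `a = 0` and `a = h + r + 1`. For `q = 5` and
`p = 10k - 4`, the residue `(-(5s + a)) mod m` is linear in `s` on six or seven explicit ranges,
so these sums are explicit cubics in `|k|`.
-/

open Finset Complex

/-- Equal to `∑ t s` over the pairs `t, s < m` with `m ∣ t + q s + a`. -/
def weightedResidueSum (q m : ℕ) (a : ℤ) : ℤ :=
  ∑ s ∈ range m, (s : ℤ) * ((-(q * s + a)) % m)

section WeightedGeometricSums

variable {R : Type*} [CommRing R]

theorem sum_range_natCast_mul_two (m : ℕ) : (∑ t ∈ range m, (t : R)) * 2 = m * (m - 1) := by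
  induction m with
  | zero => simp
  | succ m ih => rw [sum_range_succ, add_mul, ih]; push_cast; ring

theorem sub_one_mul_sum_range_natCast_mul_pow (ω : R) (n : ℕ) :
    (ω - 1) * ∑ t ∈ range n, (t : R) * ω ^ t = (n - 1) * ω ^ n - ∑ t ∈ range n, ω ^ t + 1 := by
  induction n with
  | zero => simp
  | succ n ih =>
    rw [sum_range_succ, sum_range_succ (fun t => ω ^ t), mul_add, ih]
    push_cast
    ring

end WeightedGeometricSums

section RootsOfUnity

variable {K : Type*} [Field K] {ζ : K} {m : ℕ}

theorem sub_one_mul_sum_range_natCast_mul_pow_of_pow_eq_one {ω : K} (hω : ω ^ m = 1)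
    (hω1 : ω ≠ 1) : (ω - 1) * ∑ t ∈ range m, (t : K) * ω ^ t = m := by
  rw [sub_one_mul_sum_range_natCast_mul_pow, geom_sum_eq hω1, hω, sub_self, zero_div]
  ring

theorem inv_sub_one_eq_sum_range_mul_pow {ω : K} (hω : ω ^ m = 1) (hω1 : ω ≠ 1)
    (hm : (m : K) ≠ 0) : (ω - 1)⁻¹ = (m : K)⁻¹ * ∑ t ∈ range m, (t : K) * ω ^ t := by
  refine inv_eq_of_mul_eq_one_right ?_
  rw [mul_left_comm, sub_one_mul_sum_range_natCast_mul_pow_of_pow_eq_one hω hω1, inv_mul_cancel₀ hm]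

theorem IsPrimitiveRoot.sum_Ico_zpow (hζ : IsPrimitiveRoot ζ m) (hm : m ≠ 0) (e : ℤ) :
    ∑ j ∈ Ico 1 m, (ζ ^ j) ^ e = if (m : ℤ) ∣ e then (m : K) - 1 else -1 := by
  have hsplit : ∑ j ∈ range m, (ζ ^ e) ^ j = 1 + ∑ j ∈ Ico 1 m, (ζ ^ j) ^ e := by
    rw [range_eq_Ico, sum_eq_sum_Ico_succ_bot (Nat.pos_of_ne_zero hm)]
    simp only [← zpow_natCast, ← zpow_mul, mul_comm, Nat.cast_zero, zpow_zero, zero_add]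
  rw [eq_sub_of_add_eq' hsplit.symm]
  split_ifs with hdvd
  · simp [(hζ.zpow_eq_one_iff_dvd e).mpr hdvd]
  · have hne : ζ ^ e ≠ 1 := fun h => hdvd ((hζ.zpow_eq_one_iff_dvd e).mp h)
    have hpow : (ζ ^ e) ^ m = 1 := by
      rw [← zpow_natCast, ← zpow_mul, mul_comm, zpow_mul, zpow_natCast, hζ.pow_eq_one, one_zpow]
    rw [geom_sum_eq hne, hpow, sub_self, zero_div, zero_sub]

theorem sum_range_ite_dvd_add (hm : m ≠ 0) (c : ℤ) :
    ∑ t ∈ range m, (if (m : ℤ) ∣ t + c then (t : K) else 0) = (((-c) % m : ℤ) : K) := by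
  have hm' : (0 : ℤ) < m := by exact_mod_cast Nat.pos_of_ne_zero hm
  set t₀ := ((-c) % m).toNat
  have ht₀ : (t₀ : ℤ) = (-c) % m := Int.toNat_of_nonneg (Int.emod_nonneg _ hm'.ne')
  have hunique : ∀ t ∈ range m, ((m : ℤ) ∣ t + c ↔ t = t₀) := by
    intro t ht
    have ht' : (t : ℤ) % m = t :=
      Int.emod_eq_of_lt (Int.natCast_nonneg t) (by exact_mod_cast mem_range.mp ht)
    rw [← Int.natCast_inj, ht₀]
    conv_rhs => rw [← ht']
    rw [← Int.ModEq, Int.modEq_iff_dvd, ← dvd_neg]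
    ring_nf
  rw [sum_congr rfl fun t ht => if_congr (hunique t ht) rfl rfl, sum_ite_eq', if_pos, ← ht₀]
  · norm_cast
  · have := Int.emod_lt_of_pos (-c) hm'
    rw [mem_range]
    omega

variable [CharZero K]

theorem IsPrimitiveRoot.sum_Ico_inv_pow_sub_one (hζ : IsPrimitiveRoot ζ m) (hm : m ≠ 0) :
    ∑ j ∈ Ico 1 m, (ζ ^ j - 1)⁻¹ = -((m : K) - 1) / 2 := by
  have hm' : (m : K) ≠ 0 := Nat.cast_ne_zero.mpr hm
  have hexpand : ∀ j ∈ Ico 1 m,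
      (ζ ^ j - 1)⁻¹ = (m : K)⁻¹ * ∑ t ∈ range m, (t : K) * (ζ ^ j) ^ (t : ℤ) := by
    intro j hj
    rw [mem_Ico] at hj
    simp only [zpow_natCast]
    exact inv_sub_one_eq_sum_range_mul_pow
      (by rw [← pow_mul, mul_comm, pow_mul, hζ.pow_eq_one, one_pow])
      (hζ.pow_ne_one_of_pos_of_lt (by omega) hj.2) hm'
  rw [sum_congr rfl hexpand, ← mul_sum, sum_comm]
  simp only [← mul_sum, hζ.sum_Ico_zpow hm]
  have hcollapse := sum_range_ite_dvd_add (K := K) hm 0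
  simp only [add_zero, neg_zero, Int.zero_emod, Int.cast_zero] at hcollapse
  have hsplit : ∀ t ∈ range m, ((t : K) * if (m : ℤ) ∣ (t : ℤ) then (m : K) - 1 else -1)
      = m * (if (m : ℤ) ∣ (t : ℤ) then (t : K) else 0) - t := by
    intro t _
    split_ifs <;> ring
  rw [sum_congr rfl hsplit, sum_sub_distrib, ← mul_sum, hcollapse]
  field_simp
  linear_combination -sum_range_natCast_mul_two (R := K) m

theorem IsPrimitiveRoot.sum_Ico_zpow_mul_inv_mul_inv (hζ : IsPrimitiveRoot ζ m) (hm : m ≠ 0)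
    {q : ℕ} (hq : q.Coprime m) (a : ℤ) :
    ∑ j ∈ Ico 1 m, (ζ ^ j) ^ a * ((ζ ^ j - 1)⁻¹ * ((ζ ^ j) ^ q - 1)⁻¹)
      = weightedResidueSum q m a / m - ((m : K) - 1) ^ 2 / 4 := by
  have hm' : (m : K) ≠ 0 := Nat.cast_ne_zero.mpr hm
  have hexpand : ∀ j ∈ Ico 1 m, (ζ ^ j) ^ a * ((ζ ^ j - 1)⁻¹ * ((ζ ^ j) ^ q - 1)⁻¹)
      = (m : K)⁻¹ * (m : K)⁻¹ * ∑ t ∈ range m, ∑ s ∈ range m,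
          (t : K) * s * (ζ ^ j) ^ ((t : ℤ) + q * s + a) := by
    intro j hj
    obtain ⟨hj1, hjm⟩ := mem_Ico.mp hj
    have hj0 : j ≠ 0 := Nat.one_le_iff_ne_zero.mp hj1
    have hω0 : ζ ^ j ≠ 0 := pow_ne_zero _ (hζ.ne_zero hm)
    have hroot : (ζ ^ j) ^ m = 1 := by rw [← pow_mul, mul_comm, pow_mul, hζ.pow_eq_one, one_pow]
    have hqroot : ((ζ ^ j) ^ q) ^ m = 1 := by rw [← pow_mul, mul_comm, pow_mul, hroot, one_pow]
    have hqne : (ζ ^ j) ^ q ≠ 1 := by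
      rw [← pow_mul, mul_comm, pow_mul]
      exact (hζ.pow_of_coprime q hq).pow_ne_one_of_pos_of_lt hj0 hjm
    rw [inv_sub_one_eq_sum_range_mul_pow hroot (hζ.pow_ne_one_of_pos_of_lt hj0 hjm) hm',
      inv_sub_one_eq_sum_range_mul_pow hqroot hqne hm', mul_mul_mul_comm, sum_mul_sum,
      mul_left_comm, mul_sum]
    congr 1
    refine sum_congr rfl fun t _ => ?_
    rw [mul_sum]
    refine sum_congr rfl fun s _ => ?_
    rw [zpow_add₀ hω0, zpow_add₀ hω0, zpow_mul]
    simp only [zpow_natCast]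
    ring
  rw [sum_congr rfl hexpand, ← mul_sum, sum_comm, sum_congr rfl fun t _ => sum_comm]
  simp only [← mul_sum, hζ.sum_Ico_zpow hm]
  have hsplit : ∀ t ∈ range m, ∀ s ∈ range m,
      ((t : K) * s * if (m : ℤ) ∣ (t : ℤ) + q * s + a then (m : K) - 1 else -1)
        = m * (s * if (m : ℤ) ∣ (t : ℤ) + (q * s + a) then (t : K) else 0) - t * s := by
    intro t _ s _
    rw [← add_assoc]
    split_ifs <;> ring
  rw [sum_congr rfl fun t ht => sum_congr rfl fun s hs => hsplit t ht s hs]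
  simp only [sum_sub_distrib, ← mul_sum]
  rw [sum_comm]
  simp only [← mul_sum, sum_range_ite_dvd_add hm]
  rw [← sum_mul, weightedResidueSum]
  push_cast
  field_simp
  linear_combination (-2 * (∑ t ∈ range m, (t : K)) - m * (m - 1)) *
    sum_range_natCast_mul_two (R := K) m

end RootsOfUnity

theorem Complex.sin_eq_exp_mul_I (z : ℂ) :
    sin z = (exp (z * I) ^ 2 - 1) / (2 * I * exp (z * I)) := by
  have hu := exp_ne_zero (z * I)
  rw [sin, neg_mul, exp_neg]
  field_simp
  linear_combination (1 - exp (z * I) ^ 2) * I_sq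

theorem Complex.cos_eq_exp_mul_I (z : ℂ) :
    cos z = (exp (z * I) ^ 2 + 1) / (2 * exp (z * I)) := by
  have hu := exp_ne_zero (z * I)
  rw [cos, neg_mul, exp_neg]
  field_simp

theorem Complex.cot_mul_cot_add_mul_csc_mul_csc (z w c : ℂ) :
    cos z / sin z * (cos w / sin w) + c * (1 / sin z * (1 / sin w)) =
      -((exp (z * I) ^ 2 + 1) * (exp (w * I) ^ 2 + 1) + 4 * c * exp (z * I) * exp (w * I)) /
        ((exp (z * I) ^ 2 - 1) * (exp (w * I) ^ 2 - 1)) := by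
  rw [sin_eq_exp_mul_I, sin_eq_exp_mul_I, cos_eq_exp_mul_I, cos_eq_exp_mul_I]
  have hu := exp_ne_zero (z * I)
  have hv := exp_ne_zero (w * I)
  set u := exp (z * I)
  set v := exp (w * I)
  by_cases hz : u ^ 2 - 1 = 0
  · simp [hz]
  by_cases hw : v ^ 2 - 1 = 0
  · simp [hw]
  field_simp
  linear_combination ((u ^ 2 + 1) * (v ^ 2 + 1) + 4 * c * u * v) * I_sq

theorem Complex.isPrimitiveRoot_exp_two_pi_I_div_int {p : ℤ} (hp : p ≠ 0) :
    IsPrimitiveRoot (exp (2 * Real.pi * I / p)) p.natAbs := by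
  obtain ⟨m, rfl | rfl⟩ := Int.eq_nat_or_neg p
  · simpa using isPrimitiveRoot_exp m (by omega)
  · have hinv : exp (2 * Real.pi * I / ((-m : ℤ) : ℂ)) = (exp (2 * Real.pi * I / m))⁻¹ := by
      rw [← exp_neg]
      congr 1
      push_cast
      ring
    rw [hinv, Int.natAbs_neg, Int.natAbs_natCast]
    exact (isPrimitiveRoot_exp m (by omega)).inv

theorem cot_mul_cot_add_two_neg_one_pow_mul_csc_mul_csc {p h : ℤ} (hp : p ≠ 0) (hph : p = 2 * h)
    (r j : ℕ) {ω : ℂ} (hω : ω = exp (2 * Real.pi * I / p) ^ j) (hω1 : ω ≠ 1)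
    (hωq : ω ^ (2 * r + 1) ≠ 1) :
    cos (Real.pi * j / p) / sin (Real.pi * j / p) *
        (cos (Real.pi * j * (2 * r + 1) / p) / sin (Real.pi * j * (2 * r + 1) / p)) +
      2 * (-1) ^ j * (1 / sin (Real.pi * j / p) * (1 / sin (Real.pi * j * (2 * r + 1) / p))) =
    -(1 + 2 * (ω - 1)⁻¹) * (1 + 2 * (ω ^ (2 * r + 1) - 1)⁻¹) -
      8 * (ω ^ (h + r + 1) * ((ω - 1)⁻¹ * (ω ^ (2 * r + 1) - 1)⁻¹)) := by
  have hpC : (p : ℂ) ≠ 0 := Int.cast_ne_zero.mpr hp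
  have hu : exp (Real.pi * j / p * I) ^ 2 = ω := by
    rw [hω, ← exp_nat_mul, ← exp_nat_mul]
    congr 1
    push_cast
    ring
  have hv : exp (Real.pi * j * (2 * r + 1) / p * I) ^ 2 = ω ^ (2 * r + 1) := by
    rw [hω, ← exp_nat_mul, ← exp_nat_mul, ← exp_nat_mul]
    congr 1
    push_cast
    ring
  have huv : 4 * (2 * (-1) ^ j) * exp (Real.pi * j / p * I) *
      exp (Real.pi * j * (2 * r + 1) / p * I) = 8 * ω ^ (h + r + 1) := by
    rw [hω, ← exp_nat_mul, ← exp_int_mul, ← exp_pi_mul_I, ← exp_nat_mul,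
      show ∀ x y z : ℂ, 4 * (2 * x) * y * z = 8 * (x * y * z) by intros; ring, ← exp_add, ← exp_add]
    congr 2
    rw [hph] at hpC ⊢
    push_cast at hpC ⊢
    have hhC : (h : ℂ) ≠ 0 := right_ne_zero_of_mul hpC
    field_simp
    ring
  rw [cot_mul_cot_add_mul_csc_mul_csc, hu, hv, huv]
  have h1 : ω - 1 ≠ 0 := sub_ne_zero.mpr hω1
  have h2 : ω ^ (2 * r + 1) - 1 ≠ 0 := sub_ne_zero.mpr hωq
  field_simp
  ring

theorem mul_sigmaFFU_neg_one_of_even {p h : ℤ} (hp : p ≠ 0) (hph : p = 2 * h) (r : ℕ)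
    (hcop : (2 * r + 1).Coprime p.natAbs) :
    (p : ℝ) * sigmaFFU (2 * r + 1) p (-1) =
      ((p.natAbs : ℝ) - 1) * (3 * p.natAbs - 2) -
        4 * (weightedResidueSum (2 * r + 1) p.natAbs 0 +
          2 * weightedResidueSum (2 * r + 1) p.natAbs (h + r + 1)) / p.natAbs := by
  set m := p.natAbs
  have hm : m ≠ 0 := Int.natAbs_ne_zero.mpr hp
  set ζ := exp (2 * Real.pi * I / p)
  have hζ : IsPrimitiveRoot ζ m := isPrimitiveRoot_exp_two_pi_I_div_int hp
  have hζq := hζ.pow_of_coprime _ hcop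
  rw [sigmaFFU, ← mul_assoc, mul_one_div_cancel (by exact_mod_cast hp), one_mul]
  apply Complex.ofReal_injective
  push_cast
  rw [Icc_sub_one_right_eq_Ico_of_not_isMin (by simpa using hp)]
  have hterm : ∀ j ∈ Ico 1 m, _ := fun j hj => by
    obtain ⟨hj1, hjm⟩ := mem_Ico.mp hj
    have hj0 : j ≠ 0 := Nat.one_le_iff_ne_zero.mp hj1
    refine cot_mul_cot_add_two_neg_one_pow_mul_csc_mul_csc hp hph r j (ω := ζ ^ j) rfl
      (hζ.pow_ne_one_of_pos_of_lt hj0 hjm) ?_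
    rw [← pow_mul, mul_comm, pow_mul]
    exact hζq.pow_ne_one_of_pos_of_lt hj0 hjm
  have hsplit : ∀ j ∈ Ico 1 m,
      -(1 + 2 * (ζ ^ j - 1)⁻¹) * (1 + 2 * ((ζ ^ j) ^ (2 * r + 1) - 1)⁻¹) -
        8 * ((ζ ^ j) ^ (h + r + 1) * ((ζ ^ j - 1)⁻¹ * ((ζ ^ j) ^ (2 * r + 1) - 1)⁻¹)) =
      -1 - 2 * (ζ ^ j - 1)⁻¹ - 2 * ((ζ ^ (2 * r + 1)) ^ j - 1)⁻¹ -
        4 * ((ζ ^ j) ^ (0 : ℤ) * ((ζ ^ j - 1)⁻¹ * ((ζ ^ j) ^ (2 * r + 1) - 1)⁻¹)) -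
        8 * ((ζ ^ j) ^ (h + r + 1) * ((ζ ^ j - 1)⁻¹ * ((ζ ^ j) ^ (2 * r + 1) - 1)⁻¹)) := by
    intro j _
    rw [zpow_zero, pow_right_comm ζ (2 * r + 1) j]
    ring
  rw [sum_congr rfl hterm, sum_congr rfl hsplit]
  simp only [sum_sub_distrib, sum_const, Nat.card_Ico, nsmul_eq_mul, ← mul_sum]
  rw [hζ.sum_Ico_inv_pow_sub_one hm, hζq.sum_Ico_inv_pow_sub_one hm,
    hζ.sum_Ico_zpow_mul_inv_mul_inv hm hcop, hζ.sum_Ico_zpow_mul_inv_mul_inv hm hcop,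
    Nat.cast_sub (Nat.one_le_iff_ne_zero.mpr hm)]
  have hm' : (m : ℂ) ≠ 0 := Nat.cast_ne_zero.mpr hm
  field_simp
  ring

theorem sum_range_eq_sum_sum_Ico {M : Type*} [AddCommMonoid M] (f : ℕ → M) (b : ℕ → ℕ) (K : ℕ)
    (hb0 : b 0 = 0) (hmono : ∀ i < K, b i ≤ b (i + 1)) :
    ∑ s ∈ range (b K), f s = ∑ i ∈ range K, ∑ s ∈ Ico (b i) (b (i + 1)), f s := by
  induction K with
  | zero => simp [hb0]
  | succ K ih =>
    rw [sum_range_succ, ← ih fun i hi => hmono i (by omega), range_eq_Ico, range_eq_Ico,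
      sum_Ico_consecutive _ (Nat.zero_le _) (hmono K (by omega))]

theorem six_mul_sum_range_mul_sub_s17 (q c : ℤ) (b : ℕ) :
    6 * ∑ s ∈ range b, (s : ℤ) * (c - q * s) =
      3 * c * b * (b - 1) - q * (b - 1) * b * (2 * b - 1) := by
  induction b with
  | zero => simp
  | succ b ih => rw [sum_range_succ, mul_add, ih]; push_cast; ring

/-- On the `i`-th block `b i ≤ s < b (i + 1)` the residue `-(q s + a) mod m` is the linear
function `i m - a - q s`, so each block contributes a difference of cubic polynomials. -/
theorem six_mul_weightedResidueSum_eq (q m : ℕ) (a : ℤ) {K : ℕ} (b : ℕ → ℕ) (hb0 : b 0 = 0)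
    (hbK : b K = m) (hmono : ∀ i < K, b i ≤ b (i + 1))
    (hblock : ∀ i < K, ∀ s, b i ≤ s → s < b (i + 1) →
      0 ≤ i * m - a - q * s ∧ i * m - a - q * s < m) :
    6 * weightedResidueSum q m a = ∑ i ∈ range K,
      (3 * (i * m - a) * (b (i + 1) * (b (i + 1) - 1 : ℤ) - b i * (b i - 1 : ℤ)) -
        q * ((b (i + 1) - 1 : ℤ) * b (i + 1) * (2 * b (i + 1) - 1) -
          (b i - 1 : ℤ) * b i * (2 * b i - 1))) := by
  rw [weightedResidueSum, ← hbK, sum_range_eq_sum_sum_Ico _ b K hb0 hmono, mul_sum, hbK]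
  refine sum_congr rfl fun i hi => ?_
  have hi := mem_range.mp hi
  have hlin : ∀ s ∈ Ico (b i) (b (i + 1)),
      (s : ℤ) * ((-(q * s + a)) % m) = s * ((i * m - a) - q * s) := by
    intro s hs
    obtain ⟨h1, h2⟩ := mem_Ico.mp hs
    obtain ⟨hlo, hhi⟩ := hblock i hi s h1 h2
    rw [show -(q * s + a : ℤ) = (i * m - a - q * s) + m * (-i) by ring,
      Int.add_mul_emod_self_left, Int.emod_eq_of_lt hlo hhi]
  rw [sum_congr rfl hlin, sum_Ico_eq_sub _ (hmono i hi), mul_sub, six_mul_sum_range_mul_sub_s17,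
    six_mul_sum_range_mul_sub_s17]
  ring

/- The breakpoints are `b i = ⌊((i - 1) m - a) / 5⌋ + 1` clamped to `[0, m]`: there
`-(5 s + a) mod m` jumps up by `m`. -/
theorem six_mul_weightedResidueSum_five_ten_mul_add_six_zero (n : ℕ) :
    6 * weightedResidueSum 5 (10 * n + 6) 0 = 1400 * n ^ 3 + 2640 * n ^ 2 + 1630 * n + 330 := by
  rw [six_mul_weightedResidueSum_eq 5 (10 * n + 6) 0 (K := 6)
    ([0, 1, 2 * n + 2, 4 * n + 3, 6 * n + 4, 8 * n + 5, 10 * n + 6].getD · 0) rfl rfl]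
  · simp [sum_range_succ]
    ring
  · intro i hi
    interval_cases i <;> simp <;> omega
  · intro i hi s h1 h2
    interval_cases i <;> simp at h1 h2 <;> omega

theorem six_mul_weightedResidueSum_five_ten_mul_add_six_five_mul_add_six (n : ℕ) :
    6 * weightedResidueSum 5 (10 * n + 6) (5 * n + 6) =
      1550 * n ^ 3 + 2730 * n ^ 2 + 1630 * n + 330 := by
  rw [six_mul_weightedResidueSum_eq 5 (10 * n + 6) _ (K := 7)
    ([0, 0, n + 1, 3 * n + 2, 5 * n + 3, 7 * n + 4, 9 * n + 5, 10 * n + 6].getD · 0) rfl rfl]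
  · simp [sum_range_succ]
    ring
  · intro i hi
    interval_cases i <;> simp <;> omega
  · intro i hi s h1 h2
    interval_cases i <;> simp at h1 h2 <;> omega

theorem six_mul_weightedResidueSum_five_ten_mul_add_fourteen_zero (n : ℕ) :
    6 * weightedResidueSum 5 (10 * n + 14) 0 = 1400 * n ^ 3 + 5760 * n ^ 2 + 7870 * n + 3570 := by
  rw [six_mul_weightedResidueSum_eq 5 (10 * n + 14) 0 (K := 6)
    ([0, 1, 2 * n + 3, 4 * n + 6, 6 * n + 9, 8 * n + 12, 10 * n + 14].getD · 0) rfl rfl]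
  · simp [sum_range_succ]
    ring
  · intro i hi
    interval_cases i <;> simp <;> omega
  · intro i hi s h1 h2
    interval_cases i <;> simp at h1 h2 <;> omega

theorem six_mul_weightedResidueSum_five_ten_mul_add_fourteen_neg_five_mul_sub_four (n : ℕ) :
    6 * weightedResidueSum 5 (10 * n + 14) (-5 * n - 4) =
      1550 * n ^ 3 + 5970 * n ^ 2 + 7630 * n + 3234 := by
  rw [six_mul_weightedResidueSum_eq 5 (10 * n + 14) _ (K := 6)
    ([0, n + 1, 3 * n + 4, 5 * n + 7, 7 * n + 10, 9 * n + 13, 10 * n + 14].getD · 0) rfl rfl]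
  · simp [sum_range_succ]
    ring
  · intro i hi
    interval_cases i <;> simp <;> omega
  · intro i hi s h1 h2
    interval_cases i <;> simp at h1 h2 <;> omega

theorem coprime_five_natAbs_ten_mul_sub_four (k : ℤ) : Nat.Coprime 5 (10 * k - 4).natAbs :=
  Int.isCoprime_iff_gcd_eq_one.mp (show IsCoprime (5 : ℤ) (10 * k - 4) from ⟨1 - 2 * k, 1, by ring⟩)

theorem sigmaFFU_five_ten_mul_sub_four_of_pos {k : ℤ} (hk : 0 < k) :
    sigmaFFU 5 (10 * k - 4) (-1) = -5 := by
  obtain ⟨n, rfl⟩ : ∃ n : ℕ, k = n + 1 := ⟨(k - 1).toNat, by omega⟩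
  have hσ := mul_sigmaFFU_neg_one_of_even (p := 10 * (n + 1) - 4) (h := 5 * n + 3) (by omega)
    (by ring) 2 (coprime_five_natAbs_ten_mul_sub_four _)
  have hm : (10 * ((n : ℤ) + 1) - 4).natAbs = 10 * n + 6 := by omega
  rw [hm, show (5 * n + 3 : ℤ) + (2 : ℕ) + 1 = 5 * n + 6 by push_cast; ring] at hσ
  simp only [Nat.cast_ofNat, Nat.reduceMul, Nat.reduceAdd, Int.reduceMul, Int.reduceAdd] at hσ
  push_cast at hσ
  have h0 : 6 * (weightedResidueSum 5 (10 * n + 6) 0 : ℝ) =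
      1400 * n ^ 3 + 2640 * n ^ 2 + 1630 * n + 330 := by
    exact_mod_cast six_mul_weightedResidueSum_five_ten_mul_add_six_zero n
  have ha : 6 * (weightedResidueSum 5 (10 * n + 6) (5 * n + 6) : ℝ) =
      1550 * n ^ 3 + 2730 * n ^ 2 + 1630 * n + 330 := by
    exact_mod_cast six_mul_weightedResidueSum_five_ten_mul_add_six_five_mul_add_six n
  have hm' : (10 * n + 6 : ℝ) ≠ 0 := by positivity
  apply mul_left_cancel₀ (show (10 * ((n : ℝ) + 1) - 4) ≠ 0 by linarith)
  rw [hσ]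
  field_simp
  linear_combination (-2 / 3) * h0 - (4 / 3) * ha

theorem sigmaFFU_five_ten_mul_sub_four_of_neg {k : ℤ} (hk : k < 0) :
    sigmaFFU 5 (10 * k - 4) (-1) = -3 := by
  obtain ⟨n, rfl⟩ : ∃ n : ℕ, k = -(n + 1) := ⟨(-k - 1).toNat, by omega⟩
  have hσ := mul_sigmaFFU_neg_one_of_even (p := 10 * -(n + 1) - 4) (h := -5 * n - 7) (by omega)
    (by ring) 2 (coprime_five_natAbs_ten_mul_sub_four _)
  have hm : (10 * -((n : ℤ) + 1) - 4).natAbs = 10 * n + 14 := by omega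
  rw [hm, show (-5 * n - 7 : ℤ) + (2 : ℕ) + 1 = -5 * n - 4 by push_cast; ring] at hσ
  simp only [Nat.cast_ofNat, Nat.reduceMul, Nat.reduceAdd, Int.reduceMul, Int.reduceAdd] at hσ
  push_cast at hσ
  have h0 : 6 * (weightedResidueSum 5 (10 * n + 14) 0 : ℝ) =
      1400 * n ^ 3 + 5760 * n ^ 2 + 7870 * n + 3570 := by
    exact_mod_cast six_mul_weightedResidueSum_five_ten_mul_add_fourteen_zero n
  have ha : 6 * (weightedResidueSum 5 (10 * n + 14) (-5 * n - 4) : ℝ) =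
      1550 * n ^ 3 + 5970 * n ^ 2 + 7630 * n + 3234 := by
    exact_mod_cast six_mul_weightedResidueSum_five_ten_mul_add_fourteen_neg_five_mul_sub_four n
  have hm' : (10 * n + 14 : ℝ) ≠ 0 := by positivity
  apply mul_left_cancel₀ (show (10 * -((n : ℝ) + 1) - 4) ≠ 0 by linarith)
  rw [hσ]
  field_simp
  linear_combination (-2 / 3) * h0 - (4 / 3) * ha

/-- For `k ≠ 0`, `(10k-4)/5 = [[2k, 2, 2, 2, 2]]` and `σ(5, 10k-4, -1) = -4 - sgn k`. -/
theorem ncf_sigma_ten_k_sub_four (k : ℤ) (hk : k ≠ 0) :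
    ncf [2 * k, 2, 2, 2, 2] = ((10 * k - 4 : ℤ) : ℚ) / 5 ∧
      sigmaFFU 5 (10 * k - 4) (-1) = -4 - ((Int.sign k : ℤ) : ℝ) := by
  refine ⟨by norm_num [ncf]; ring, ?_⟩
  rcases hk.lt_or_gt with hneg | hpos
  · rw [sigmaFFU_five_ten_mul_sub_four_of_neg hneg, Int.sign_eq_neg_one_of_neg hneg]
    norm_num
  · rw [sigmaFFU_five_ten_mul_sub_four_of_pos hpos, Int.sign_eq_one_of_pos hpos]
    norm_num
end
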